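/- Let G = (V, E) be a strongly connected directed graph and A an Abelian group. Then the group HR(E, A) of rigid-balanced functions f : E → A (sum of values along every directed cycle with distinct edges is zero) is isomorphic to A^(|V|-1). -/

import Mathlib

/-- A directed multigraph: edges with a source and a target vertex. -/
structure Dgraph (V : Type) (E : Type) where
  src : E → V
  tgt : E → V

namespace Dgraph

variable {V E : Type}

/-- The symmetrization of a digraph: each edge together with its formal reversal.
`Sum.inl e` is the edge `e` itself, `Sum.inr e` is its reversal `ē`. -/
def sym (G : Dgraph V E) : Dgraph V (E ⊕ E) where
  src := Sum.elim G.src G.tgt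
  tgt := Sum.elim G.tgt G.src

/-- A cycle: a list of pairwise distinct edges, consecutively incident,
and closed (the target of the last edge is the source of the first).
The empty list is the trivial cycle. -/
def IsCycle (G : Dgraph V E) (l : List E) : Prop :=
  l.Nodup ∧ l.Chain' (fun a b => G.tgt a = G.src b) ∧
    ∀ h : l ≠ [], G.tgt (l.getLast h) = G.src (l.head h)

/-- Adjacency in the underlying undirected graph. -/
def Adj (G : Dgraph V E) (x y : V) : Prop :=
  ∃ e, (G.src e = x ∧ G.tgt e = y) ∨ (G.src e = y ∧ G.tgt e = x)

/-- Weak connectivity: the underlying undirected graph is connected. -/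
def WeaklyConnected (G : Dgraph V E) : Prop :=
  ∀ x y : V, Relation.ReflTransGen G.Adj x y

/-- The underlying undirected graph is bipartite. -/
def Bipartite (G : Dgraph V E) : Prop :=
  ∃ c : V → Bool, ∀ e, c (G.src e) ≠ c (G.tgt e)

variable (A : Type) [AddCommGroup A]

/-- A function on the symmetrized edge set taking opposite values on reversed edges. -/
def Antisym (f : E ⊕ E → A) : Prop :=
  ∀ e : E, f (Sum.inr e) = - f (Sum.inl e)

/-- A function on edges is balanced if its sum along every cycle is zero. -/
def BalancedE (G : Dgraph V E) (f : E → A) : Prop :=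
  ∀ l : List E, G.IsCycle l → (l.map f).sum = 0

/-- A pair of a function `g` on vertices and `f` on edges is balanced if the
alternating sum `g v₁ + f e₁ + ⋯ + g vₙ + f eₙ` along every cycle is zero
(the vertices of a cycle are exactly the sources of its edges). -/
def BalancedVE (G : Dgraph V E) (g : V → A) (f : E → A) : Prop :=
  ∀ l : List E, G.IsCycle l → (l.map (fun e => g (G.src e) + f e)).sum = 0

variable {A}

lemma sum_map_add (l : List E) (f g : E → A) :
    (l.map (fun e => f e + g e)).sum = (l.map f).sum + (l.map g).sum := by
  induction l with
  | nil => simp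
  | cons a t ih => simp only [List.map_cons, List.sum_cons, ih]; abel

lemma sum_map_neg (l : List E) (f : E → A) :
    (l.map (fun e => - f e)).sum = - (l.map f).sum := by
  induction l with
  | nil => simp
  | cons a t ih => simp only [List.map_cons, List.sum_cons, ih]; abel

lemma sum_map_eq_zero (l : List E) (f : E → A) (h : ∀ e, f e = 0) :
    (l.map f).sum = 0 := by
  induction l with
  | nil => simp
  | cons a t ih => simp [h, ih]

variable (A)

/-- `HF(𝔼, A)`: the group of flexible-balanced functions on the symmetrized edges. -/
def HF (G : Dgraph V E) : AddSubgroup ((E ⊕ E) → A) where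
  carrier := {f | Antisym A f ∧ BalancedE A G.sym f}
  zero_mem' :=
    ⟨fun e => by simp, fun l _ => sum_map_eq_zero l _ (fun e => by simp)⟩
  add_mem' := by
    intro f g hf hg
    refine ⟨fun e => ?_, fun l hl => ?_⟩
    · have h1 := hf.1 e; have h2 := hg.1 e
      simp only [Pi.add_apply]
      rw [h1, h2]; abel
    · have hmap : l.map (f + g) = l.map (fun e => f e + g e) := rfl
      rw [hmap, sum_map_add l f g, hf.2 l hl, hg.2 l hl, add_zero]
  neg_mem' := by
    intro f hf
    refine ⟨fun e => ?_, fun l hl => ?_⟩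
    · simp only [Pi.neg_apply]; rw [hf.1 e]
    · have hmap : l.map (-f) = l.map (fun e => - f e) := rfl
      rw [hmap, sum_map_neg l f, hf.2 l hl, neg_zero]

/-- `WF(V ∪ 𝔼, A)`: the group of flexible-balanced functions on vertices and edges,
encoded as pairs (function on vertices, function on symmetrized edges). -/
def WF (G : Dgraph V E) : AddSubgroup ((V → A) × ((E ⊕ E) → A)) where
  carrier := {p | Antisym A p.2 ∧ BalancedVE A G.sym p.1 p.2}
  zero_mem' :=
    ⟨fun e => by simp, fun l _ => sum_map_eq_zero l _ (fun e => by simp)⟩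
  add_mem' := by
    intro p q hp hq
    refine ⟨fun e => ?_, fun l hl => ?_⟩
    · have h1 := hp.1 e; have h2 := hq.1 e
      simp only [Prod.snd_add, Pi.add_apply]
      rw [h1, h2]; abel
    · have h := sum_map_add l (fun e => p.1 (G.sym.src e) + p.2 e)
        (fun e => q.1 (G.sym.src e) + q.2 e)
      simp only [Prod.fst_add, Prod.snd_add, Pi.add_apply]
      have heq : (l.map (fun e => (p.1 (G.sym.src e) + q.1 (G.sym.src e)) + (p.2 e + q.2 e))).sum
          = (l.map (fun e => (p.1 (G.sym.src e) + p.2 e) + (q.1 (G.sym.src e) + q.2 e))).sum := by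
        congr 1; apply List.map_congr_left; intro e _; abel
      rw [heq, h, hp.2 l hl, hq.2 l hl, add_zero]
  neg_mem' := by
    intro p hp
    refine ⟨fun e => ?_, fun l hl => ?_⟩
    · simp only [Prod.snd_neg, Pi.neg_apply]; rw [hp.1 e]
    · have h := sum_map_neg l (fun e => p.1 (G.sym.src e) + p.2 e)
      simp only [Prod.fst_neg, Prod.snd_neg, Pi.neg_apply]
      have heq : (l.map (fun e => -p.1 (G.sym.src e) + -p.2 e)).sum
          = (l.map (fun e => -(p.1 (G.sym.src e) + p.2 e))).sum := by
        congr 1; apply List.map_congr_left; intro e _; abel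
      rw [heq, h, hp.2 l hl, neg_zero]

/-- `BF(V, A)`: the group of flexible-balanceable functions on vertices. -/
def BF (G : Dgraph V E) : AddSubgroup (V → A) where
  carrier := {g | ∃ f : (E ⊕ E) → A, (g, f) ∈ WF A G}
  zero_mem' := ⟨0, (WF A G).zero_mem⟩
  add_mem' := by
    rintro g1 g2 ⟨f1, h1⟩ ⟨f2, h2⟩
    exact ⟨f1 + f2, (WF A G).add_mem h1 h2⟩
  neg_mem' := by
    rintro g ⟨f, h⟩
    exact ⟨-f, (WF A G).neg_mem h⟩

/-- The subgroup of elements of order dividing 2. -/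
def Two : AddSubgroup A where
  carrier := {a | a + a = 0}
  zero_mem' := by simp
  add_mem' := by
    intro a b ha hb
    have h : a + b + (a + b) = (a + a) + (b + b) := by abel
    simp only [Set.mem_setOf_eq] at *
    rw [h, ha, hb, add_zero]
  neg_mem' := by
    intro a ha
    simp only [Set.mem_setOf_eq] at *
    rw [← neg_add]; simp [ha]

/-- `HR(E, A)`: the group of rigid-balanced functions on edges. -/
def HR (G : Dgraph V E) : AddSubgroup (E → A) where
  carrier := {f | BalancedE A G f}
  zero_mem' := fun l _ => sum_map_eq_zero l _ (fun e => by simp)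
  add_mem' := by
    intro f g hf hg l hl
    have hmap : l.map (f + g) = l.map (fun e => f e + g e) := rfl
    rw [hmap, sum_map_add l f g, hf l hl, hg l hl, add_zero]
  neg_mem' := by
    intro f hf l hl
    have hmap : l.map (-f) = l.map (fun e => - f e) := rfl
    rw [hmap, sum_map_neg l f, hf l hl, neg_zero]

/-- `WR(V ∪ E, A)`: the group of rigid-balanced functions on vertices and edges,
encoded as pairs (function on vertices, function on edges). -/
def WR (G : Dgraph V E) : AddSubgroup ((V → A) × (E → A)) where
  carrier := {p | BalancedVE A G p.1 p.2}
  zero_mem' := fun l _ => sum_map_eq_zero l _ (fun e => by simp)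
  add_mem' := by
    intro p q hp hq l hl
    have h := sum_map_add l (fun e => p.1 (G.src e) + p.2 e)
      (fun e => q.1 (G.src e) + q.2 e)
    simp only [Prod.fst_add, Prod.snd_add, Pi.add_apply]
    have heq : (l.map (fun e => (p.1 (G.src e) + q.1 (G.src e)) + (p.2 e + q.2 e))).sum
        = (l.map (fun e => (p.1 (G.src e) + p.2 e) + (q.1 (G.src e) + q.2 e))).sum := by
      congr 1; apply List.map_congr_left; intro e _; abel
    rw [heq, h, hp l hl, hq l hl, add_zero]
  neg_mem' := by
    intro p hp l hl
    have h := sum_map_neg l (fun e => p.1 (G.src e) + p.2 e)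
    simp only [Prod.fst_neg, Prod.snd_neg, Pi.neg_apply]
    have heq : (l.map (fun e => -p.1 (G.src e) + -p.2 e)).sum
        = (l.map (fun e => -(p.1 (G.src e) + p.2 e))).sum := by
      congr 1; apply List.map_congr_left; intro e _; abel
    rw [heq, h, hp l hl, neg_zero]

variable {A}

/-- One-step directed reachability. -/
def Step (G : Dgraph V E) (x y : V) : Prop := ∃ e, G.src e = x ∧ G.tgt e = y

/-- Directed reachability. -/
def Reach (G : Dgraph V E) : V → V → Prop := Relation.ReflTransGen G.Step

/-- Every vertex is reachable from every other vertex by a directed path. -/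
def StronglyConnected (G : Dgraph V E) : Prop := ∀ x y : V, G.Reach x y

/-- Mutual directed reachability as an equivalence (setoid) on vertices;
its classes are the strongly connected components. -/
def scSetoid (G : Dgraph V E) : Setoid V where
  r x y := G.Reach x y ∧ G.Reach y x
  iseqv := ⟨fun _ => ⟨.refl, .refl⟩, fun h => ⟨h.2, h.1⟩,
    fun h1 h2 => ⟨h1.1.trans h2.1, h2.2.trans h1.2⟩⟩

/-- The number `k̄(G)` of strongly connected components. -/
noncomputable def numSCC (G : Dgraph V E) : ℕ := Nat.card (Quotient G.scSetoid)

/-- The number `r(G)` of edges joining vertices in distinct strongly connected components. -/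
noncomputable def numCrossEdges (G : Dgraph V E) : ℕ :=
  Nat.card {e : E // ¬ G.scSetoid.r (G.src e) (G.tgt e)}

/-- A directed path from `x` to `y`: pairwise distinct, consecutively incident edges,
starting at `x` and ending at `y`; the empty path joins each vertex to itself. -/
def IsPathFrom (G : Dgraph V E) (l : List E) (x y : V) : Prop :=
  l.Nodup ∧ l.Chain' (fun a b => G.tgt a = G.src b) ∧
    ((l = [] ∧ x = y) ∨ ∃ h : l ≠ [], G.src (l.head h) = x ∧ G.tgt (l.getLast h) = y)

/-- Reorientation of the edges: edge `e` keeps its direction iff `o e = true`. -/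
def orient (G : Dgraph V E) (o : E → Bool) : Dgraph V E where
  src e := if o e then G.src e else G.tgt e
  tgt e := if o e then G.tgt e else G.src e

/-- The underlying edge of a symmetrized edge. -/
def proj : E ⊕ E → E := Sum.elim id id

/-- A cycle in the underlying *undirected* graph: edges may be traversed in either
direction, and the underlying edges are pairwise distinct. -/
def IsUCycle (G : Dgraph V E) (l : List (E ⊕ E)) : Prop :=
  (l.map proj).Nodup ∧ l.Chain' (fun a b => G.sym.tgt a = G.sym.src b) ∧
    ∀ h : l ≠ [], G.sym.tgt (l.getLast h) = G.sym.src (l.head h)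

variable (A)

/-- A function on the edges of an undirected graph is balanced if its sum along
every undirected cycle (each edge contributing its value regardless of the
traversal direction) is zero. -/
def UBalanced (G : Dgraph V E) (f : E → A) : Prop :=
  ∀ l : List (E ⊕ E), G.IsUCycle l → (l.map (fun ee => f (proj ee))).sum = 0

/-- The subgroup of functions on vertices vanishing at a chosen base vertex. -/
def vanishing (v₀ : V) : AddSubgroup (V → A) where
  carrier := {g | g v₀ = 0}
  zero_mem' := by simp
  add_mem' := by
    intro a b ha hb
    simp only [Set.mem_setOf_eq, Pi.add_apply] at *
    rw [ha, hb, add_zero]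
  neg_mem' := by
    intro a ha
    simp only [Set.mem_setOf_eq, Pi.neg_apply] at *
    rw [ha, neg_zero]

variable {A}

/-- The subgraph induced by a strongly connected component `j`. -/
def compGraph (G : Dgraph V E) (j : Quotient G.scSetoid) :
    Dgraph {v : V // Quotient.mk G.scSetoid v = j}
      {e : E // Quotient.mk G.scSetoid (G.src e) = j ∧ Quotient.mk G.scSetoid (G.tgt e) = j} where
  src e := ⟨G.src e.1, e.2.1⟩
  tgt e := ⟨G.tgt e.1, e.2.2⟩

end Dgraph

/-! A balanced function on a strongly connected digraph is a coboundary
`g (tgt e) - g (src e)`: a closed walk splits into cycles, so the sum of a balanced `f` along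
a walk from a base vertex `v₀` depends only on the endpoint, and this is a potential `g`,
unique once normalised by `g v₀ = 0`. -/

lemma List.exists_eq_append_cons_append_cons_of_not_nodup {α : Type*} {l : List α}
    (h : ¬ l.Nodup) : ∃ a l₁ l₂ l₃, l = l₁ ++ a :: (l₂ ++ a :: l₃) := by
  obtain ⟨a, ha⟩ := not_forall_not.1 (mt List.nodup_iff_sublist.2 h)
  obtain ⟨r₁, r₂, rfl, hr₁, hr₂⟩ := List.cons_sublist_iff.1 ha
  obtain ⟨l₁, l₂, rfl⟩ := List.append_of_mem hr₁
  obtain ⟨l₃, l₄, rfl⟩ := List.append_of_mem (List.singleton_sublist.1 hr₂)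
  exact ⟨a, l₁, l₂ ++ l₃, l₄, by simp⟩

namespace Dgraph

variable {V E A : Type} [AddCommGroup A]

def IsWalk (G : Dgraph V E) : List E → V → V → Prop
  | [], x, y => x = y
  | e :: l, x, y => G.src e = x ∧ IsWalk G l (G.tgt e) y

def coboundary (G : Dgraph V E) : (V → A) →+ (E → A) :=
  AddMonoidHom.mk' (fun g e => g (G.tgt e) - g (G.src e)) fun g h => by
    funext e
    simp only [Pi.add_apply]
    abel

variable {G : Dgraph V E}

@[simp]
lemma coboundary_apply (g : V → A) (e : E) : G.coboundary g e = g (G.tgt e) - g (G.src e) :=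
  rfl

lemma mem_vanishing {v₀ : V} {g : V → A} : g ∈ vanishing A v₀ ↔ g v₀ = 0 := Iff.rfl

@[simp]
lemma isWalk_nil {x y : V} : G.IsWalk [] x y ↔ x = y := Iff.rfl

@[simp]
lemma isWalk_cons {e : E} {l : List E} {x y : V} :
    G.IsWalk (e :: l) x y ↔ G.src e = x ∧ G.IsWalk l (G.tgt e) y := Iff.rfl

lemma isWalk_append {l m : List E} {x z : V} :
    G.IsWalk (l ++ m) x z ↔ ∃ y, G.IsWalk l x y ∧ G.IsWalk m y z := by
  induction l generalizing x with
  | nil => simp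
  | cons e l ih => simp [ih, and_assoc]

lemma IsWalk.append {l m : List E} {x y z : V} (hl : G.IsWalk l x y) (hm : G.IsWalk m y z) :
    G.IsWalk (l ++ m) x z :=
  isWalk_append.2 ⟨y, hl, hm⟩

lemma IsWalk.isChain {l : List E} {x y : V} (h : G.IsWalk l x y) :
    l.IsChain (fun a b => G.tgt a = G.src b) := by
  induction l generalizing x with
  | nil => exact .nil
  | cons e l ih =>
    cases l with
    | nil => exact .singleton e
    | cons e' l => exact .cons_cons h.2.1.symm (ih h.2)

lemma IsWalk.src_head {l : List E} {x y : V} (h : G.IsWalk l x y) (hne : l ≠ []) :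
    G.src (l.head hne) = x := by
  cases l with
  | nil => contradiction
  | cons e l => exact h.1

lemma IsWalk.tgt_getLast {l : List E} {x y : V} (h : G.IsWalk l x y) (hne : l ≠ []) :
    G.tgt (l.getLast hne) = y := by
  induction l generalizing x with
  | nil => contradiction
  | cons e l ih =>
    cases l with
    | nil => exact h.2
    | cons e' l => exact ih h.2 _

lemma isWalk_of_isChain {l : List E} (hne : l ≠ [])
    (hc : l.IsChain (fun a b => G.tgt a = G.src b)) :
    G.IsWalk l (G.src (l.head hne)) (G.tgt (l.getLast hne)) := by
  induction l with
  | nil => contradiction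
  | cons e l ih =>
    cases l with
    | nil => exact ⟨rfl, rfl⟩
    | cons e' l =>
      obtain ⟨hee', hc⟩ := List.isChain_cons_cons.1 hc
      refine ⟨rfl, ?_⟩
      simpa [hee'] using ih (List.cons_ne_nil _ _) hc

lemma IsWalk.isCycle {l : List E} {x : V} (h : G.IsWalk l x x) (hnd : l.Nodup) :
    G.IsCycle l :=
  ⟨hnd, h.isChain, fun hne => by rw [h.tgt_getLast hne, h.src_head hne]⟩

lemma IsCycle.isWalk {l : List E} (h : G.IsCycle l) (hne : l ≠ []) :
    G.IsWalk l (G.src (l.head hne)) (G.src (l.head hne)) := by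
  simpa only [h.2.2 hne] using isWalk_of_isChain hne h.2.1

lemma Reach.exists_isWalk {x y : V} (h : G.Reach x y) : ∃ l, G.IsWalk l x y := by
  induction h with
  | refl => exact ⟨[], rfl⟩
  | tail _ hstep ih =>
    obtain ⟨l, hl⟩ := ih
    obtain ⟨e, rfl, rfl⟩ := hstep
    exact ⟨l ++ [e], hl.append ⟨rfl, rfl⟩⟩

lemma IsWalk.sum_map_coboundary {l : List E} {x y : V} (h : G.IsWalk l x y) (g : V → A) :
    (l.map (G.coboundary g)).sum = g y - g x := by
  induction l generalizing x with
  | nil => simp [h.symm]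
  | cons e l ih =>
    obtain ⟨rfl, h⟩ := h
    rw [List.map_cons, List.sum_cons, ih h, coboundary_apply]
    abel

/-- A closed walk splits at a repeated edge into two shorter closed walks, so by induction
it is a concatenation of cycles. -/
theorem IsWalk.sum_map_eq_zero {f : E → A} (hf : G.BalancedE A f) {l : List E} {x : V}
    (h : G.IsWalk l x x) : (l.map f).sum = 0 := by
  by_cases hnd : l.Nodup
  · exact hf l (h.isCycle hnd)
  obtain ⟨e, l₁, l₂, l₃, rfl⟩ := List.exists_eq_append_cons_append_cons_of_not_nodup hnd
  obtain ⟨y, h₁, rfl, h₂₃⟩ := isWalk_append.1 h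
  obtain ⟨z, h₂, he, h₃⟩ := isWalk_append.1 h₂₃
  have hinner : G.IsWalk (e :: l₂) (G.src e) (G.src e) := ⟨rfl, he ▸ h₂⟩
  have houter : G.IsWalk (l₁ ++ e :: l₃) x x := h₁.append ⟨rfl, h₃⟩
  have hsplit : ((l₁ ++ e :: (l₂ ++ e :: l₃)).map f).sum
      = ((e :: l₂).map f).sum + ((l₁ ++ e :: l₃).map f).sum := by
    simp only [List.map_append, List.map_cons, List.sum_append, List.sum_cons]
    abel
  rw [hsplit, hinner.sum_map_eq_zero hf, houter.sum_map_eq_zero hf, add_zero]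
termination_by l.length
decreasing_by all_goals simp_all <;> omega

lemma sum_map_eq_of_isWalk (hG : G.StronglyConnected) {f : E → A} (hf : G.BalancedE A f)
    {l m : List E} {x y : V} (hl : G.IsWalk l x y) (hm : G.IsWalk m x y) :
    (l.map f).sum = (m.map f).sum := by
  obtain ⟨r, hr⟩ := (hG y x).exists_isWalk
  have hlr := (hl.append hr).sum_map_eq_zero hf
  have hmr := (hm.append hr).sum_map_eq_zero hf
  rw [List.map_append, List.sum_append] at hlr hmr
  exact add_right_cancel (hlr.trans hmr.symm)

lemma coboundary_mem_HR (g : V → A) : G.coboundary g ∈ HR A G := by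
  intro l hl
  rcases eq_or_ne l [] with rfl | hne
  · rfl
  · rw [(hl.isWalk hne).sum_map_coboundary, sub_self]

/-- The potential of `f` at `v` is its sum along any walk from `v₀` to `v`. -/
lemma exists_coboundary_eq (hG : G.StronglyConnected) {f : E → A} (hf : f ∈ HR A G) (v₀ : V) :
    ∃ g ∈ vanishing A v₀, G.coboundary g = f := by
  choose w hw using fun v => (hG v₀ v).exists_isWalk
  refine ⟨fun v => ((w v).map f).sum, (hw v₀).sum_map_eq_zero hf, funext fun e => ?_⟩
  have hlast : G.IsWalk [e] (G.src e) (G.tgt e) := ⟨rfl, rfl⟩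
  have hext := sum_map_eq_of_isWalk hG hf (hw (G.tgt e)) ((hw (G.src e)).append hlast)
  simp [hext]

lemma eq_zero_of_coboundary_eq_zero (hG : G.StronglyConnected) {v₀ : V} {g : V → A}
    (hg : g ∈ vanishing A v₀) (h : G.coboundary g = 0) : g = 0 := by
  funext v
  obtain ⟨l, hl⟩ := (hG v₀ v).exists_isWalk
  have := hl.sum_map_coboundary g
  rw [h] at this
  simpa [Pi.zero_def, mem_vanishing.1 hg, sub_eq_zero, eq_comm] using this

variable (G) in
noncomputable def vanishingEquivHR (hG : G.StronglyConnected) (v₀ : V) :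
    vanishing A v₀ ≃+ HR A G :=
  AddEquiv.ofBijective ((G.coboundary.comp (vanishing A v₀).subtype).codRestrict (HR A G)
      fun g => coboundary_mem_HR g.1)
    ⟨(injective_iff_map_eq_zero _).2 fun g hg => Subtype.ext <|
        eq_zero_of_coboundary_eq_zero hG g.2 (congrArg Subtype.val hg),
      fun f => by
        obtain ⟨g, hg, hgf⟩ := exists_coboundary_eq hG f.2 v₀
        exact ⟨⟨g, hg⟩, Subtype.ext hgf⟩⟩

variable (A) in
def vanishingEquivPi [DecidableEq V] (v₀ : V) :
    vanishing A v₀ ≃+ ({v // v ≠ v₀} → A) where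
  toFun g v := g.1 v
  invFun h := ⟨fun v => if hv : v = v₀ then 0 else h ⟨v, hv⟩, dif_pos rfl⟩
  left_inv g := Subtype.ext <| funext fun v => by
    by_cases hv : v = v₀
    · subst hv; simpa using g.2.symm
    · simp [hv]
  right_inv h := funext fun v => dif_neg v.2
  map_add' _ _ := rfl

end Dgraph

/-- For a finite strongly connected directed graph `G = (V, E)`, the
group `HR(E, A)` of rigid-balanced functions on edges is isomorphic to `A^(|V| - 1)`. -/
theorem stmt9 (V E : Type) [Fintype V] (A : Type) [AddCommGroup A]
    (G : Dgraph V E) (hG : G.StronglyConnected) :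
    Nonempty (Dgraph.HR A G ≃+ (Fin (Fintype.card V - 1) → A)) := by
  classical
  rcases isEmpty_or_nonempty V with hV | ⟨⟨v₀⟩⟩
  · have : IsEmpty E := ⟨fun e => isEmptyElim (G.src e)⟩
    have : IsEmpty (Fin (Fintype.card V - 1)) := by
      rw [Fintype.card_eq_zero, Nat.zero_sub]; infer_instance
    exact ⟨AddEquiv.ofBijective (0 : Dgraph.HR A G →+ _)
      ⟨fun _ _ _ => Subsingleton.elim _ _, fun _ => ⟨0, Subsingleton.elim _ _⟩⟩⟩
  have hcard : Fintype.card {v // v ≠ v₀} = Fintype.card V - 1 := by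
    simp [Fintype.card_subtype_compl]
  exact ⟨(Dgraph.vanishingEquivHR G hG v₀).symm.trans <|
    (Dgraph.vanishingEquivPi A v₀).trans <|
    AddEquiv.arrowCongr (Fintype.equivFinOfCardEq hcard) (AddEquiv.refl A)⟩
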